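/- arXiv:1703.06862 — 11 statements merged into one kernel-verified Lean document; each statement's English description precedes it below -/
import Mathlib

section
/- Let X be a topological space that is strongly indecomposable, i.e., for every two nonempty disjoint open sets U and V there exist closed sets A and B with X = A ∪ B, A ∩ U ≠ ∅, B ∩ U ≠ ∅, and A ∩ B ⊆ V. Then X is indecomposable, i.e., every connected subset of X is either dense or nowhere dense in X. -/
/-- A space is *strongly indecomposable* if for every two nonempty disjoint open
sets `U` and `V` there are closed sets `A`, `B` covering the space, each meeting `U`,
with `A ∩ B ⊆ V`. -/
def StronglyIndecomposable (X : Type*) [TopologicalSpace X] : Prop :=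
  ∀ U V : Set X, IsOpen U → IsOpen V → U.Nonempty → V.Nonempty → Disjoint U V →
    ∃ A B : Set X, IsClosed A ∧ IsClosed B ∧ A ∪ B = Set.univ ∧
      (A ∩ U).Nonempty ∧ (B ∩ U).Nonempty ∧ A ∩ B ⊆ V

/-- A space is *indecomposable* if every connected subset is dense or nowhere dense. -/
def IndecomposableSpace (X : Type*) [TopologicalSpace X] : Prop :=
  ∀ C : Set X, IsConnected C → Dense C ∨ IsNowhereDense C

/-- Every strongly indecomposable space is indecomposable. -/
theorem stronglyIndecomposable_indecomposable (X : Type*) [TopologicalSpace X]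
    (h : StronglyIndecomposable X) : IndecomposableSpace X := by
  intro C hC
  by_contra hcon
  push_neg at hcon
  obtain ⟨hnd, hnnd⟩ := hcon
  set U : Set X := interior (closure C) with hU
  set V : Set X := (closure C)ᶜ with hV
  have hUopen : IsOpen U := isOpen_interior
  have hVopen : IsOpen V := isClosed_closure.isOpen_compl
  have hUne : U.Nonempty := by
    rw [Set.nonempty_iff_ne_empty]
    exact hnnd
  have hVne : V.Nonempty := by
    rw [Set.nonempty_iff_ne_empty]
    intro hvemp
    apply hnd
    rw [dense_iff_closure_eq]
    have := compl_compl (closure C)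
    rw [← hV, hvemp, Set.compl_empty] at this
    exact this.symm
  have hdisj : Disjoint U V := by
    rw [Set.disjoint_right]
    intro x hx hxU
    exact hx (interior_subset hxU)
  obtain ⟨A, B, hAc, hBc, hABuniv, hAU, hBU, hAB⟩ := h U V hUopen hVopen hUne hVne hdisj
  -- C is not contained in A nor in B
  have key : ∀ D E : Set X, IsClosed D → (E ∩ U).Nonempty → E ∩ D ⊆ V → ¬ C ⊆ D := by
    intro D E hD hEU hEDV hCD
    have hclD : closure C ⊆ D := hD.closure_subset_iff.mpr hCD
    obtain ⟨x, hxE, hxU⟩ := hEU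
    have hxcl : x ∈ closure C := interior_subset hxU
    have hxV : x ∈ V := hEDV ⟨hxE, hclD hxcl⟩
    exact hxV hxcl
  have hnA : ¬ C ⊆ A := key A B hAc hBU (by rw [Set.inter_comm]; exact hAB)
  have hnB : ¬ C ⊆ B := key B A hBc hAU hAB
  -- use preconnectedness with open sets Bᶜ, Aᶜ
  have hpre := hC.isPreconnected
  have hsub : C ⊆ Bᶜ ∪ Aᶜ := by
    intro x hx
    rw [Set.mem_union, Set.mem_compl_iff, Set.mem_compl_iff]
    by_contra hcon2
    push_neg at hcon2
    have hxV : x ∈ V := hAB ⟨hcon2.2, hcon2.1⟩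
    exact hxV (subset_closure hx)
  have h1 : (C ∩ Bᶜ).Nonempty := by
    rw [Set.inter_compl_nonempty_iff]; exact hnB
  have h2 : (C ∩ Aᶜ).Nonempty := by
    rw [Set.inter_compl_nonempty_iff]; exact hnA
  obtain ⟨x, hxC, hxB, hxA⟩ := hpre Bᶜ Aᶜ hBc.isOpen_compl hAc.isOpen_compl hsub h1 h2
  have : x ∈ A ∪ B := hABuniv ▸ Set.mem_univ x
  rcases this with hx | hx
  · exact hxA hx
  · exact hxB hx
end

section
/- Every perfect totally disconnected topological space is strongly indecomposable. -/
/-- Every perfect (no isolated points) totally disconnected (all quasi-components are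
singletons) space is strongly indecomposable. -/
theorem perfect_totallyDisconnected_stronglyIndecomposable (X : Type*) [TopologicalSpace X]
    (hperf : ∀ x : X, ¬ IsOpen ({x} : Set X))
    (htd : ∀ x : X, ⋂₀ {A : Set X | IsClopen A ∧ x ∈ A} = {x}) :
    StronglyIndecomposable X := by
  intro U V hU hV ⟨x, hxU⟩ _ _
  -- U is not the singleton {x}, since {x} is not open
  have hne : ∃ y ∈ U, y ≠ x := by
    by_contra h
    push_neg at h
    apply hperf x
    have : U = {x} := Set.eq_singleton_iff_unique_mem.mpr ⟨hxU, h⟩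
    rwa [this] at hU
  obtain ⟨y, hyU, hyx⟩ := hne
  -- y is not in the quasi-component of x, so a clopen set separates them
  have hy : y ∉ ⋂₀ {A : Set X | IsClopen A ∧ x ∈ A} := by
    rw [htd x]; exact hyx
  simp only [Set.mem_sInter, Set.mem_setOf_eq, not_forall] at hy
  obtain ⟨C, ⟨hC, hxC⟩, hyC⟩ := hy
  refine ⟨C, Cᶜ, hC.isClosed, hC.compl.isClosed, Set.union_compl_self C,
    ⟨x, hxC, hxU⟩, ⟨y, hyC, hyU⟩, ?_⟩
  rw [Set.inter_compl_self]
  exact Set.empty_subset V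
end

section
/- Every indecomposable compact Hausdorff space is strongly indecomposable. -/
/-- Every indecomposable compact Hausdorff space is strongly indecomposable. -/
theorem indecomposable_compact_stronglyIndecomposable (X : Type*) [TopologicalSpace X]
    [CompactSpace X] [T2Space X] (h : IndecomposableSpace X) :
    StronglyIndecomposable X := by
  intro U V hU hV hUne hVne hdis
  set K : Set X := Vᶜ with hKdef
  have hKclosed : IsClosed K := hV.isClosed_compl
  have hUK : U ⊆ K := fun x hx => Set.disjoint_left.mp hdis hx
  obtain ⟨u₁, hu₁⟩ := hUne
  have hu₁K : u₁ ∈ K := hUK hu₁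
  set C : Set X := connectedComponentIn K u₁ with hCdef
  have hCconn : IsConnected C := isConnected_connectedComponentIn_iff.mpr hu₁K
  have hCsub : C ⊆ K := connectedComponentIn_subset K u₁
  have hCnd : IsNowhereDense C := by
    rcases h C hCconn with hd | hnd
    · exfalso
      obtain ⟨v, hv⟩ := hVne
      have hcl : closure C ⊆ K := hKclosed.closure_subset_iff.mpr hCsub
      exact hcl (hd v) hv
    · exact hnd
  -- find a point of U not in closure C
  have hnot : ¬ U ⊆ closure C := by
    intro hsub
    have h1 : U ⊆ interior (closure C) := interior_maximal hsub hU
    rw [hCnd] at h1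
    exact h1 hu₁
  obtain ⟨u₂, hu₂U, hu₂C⟩ := Set.not_subset.mp hnot
  have hu₂K : u₂ ∈ K := hUK hu₂U
  have hu₂notC : u₂ ∉ C := fun h' => hu₂C (subset_closure h')
  haveI : CompactSpace K := isCompact_iff_compactSpace.mp (hKclosed.isCompact)
  set p₁ : K := ⟨u₁, hu₁K⟩ with hp₁def
  set p₂ : K := ⟨u₂, hu₂K⟩ with hp₂def
  have hp₂ : p₂ ∉ connectedComponent p₁ := by
    intro hmem
    apply hu₂notC
    rw [hCdef, connectedComponentIn_eq_image hu₁K]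
    exact ⟨p₂, hmem, rfl⟩
  rw [connectedComponent_eq_iInter_isClopen, Set.mem_iInter] at hp₂
  push_neg at hp₂
  obtain ⟨⟨Z, hZclopen, hp₁Z⟩, hp₂Z⟩ := hp₂
  -- images in X
  set A' : Set X := Subtype.val '' Z with hA'def
  set B' : Set X := Subtype.val '' Zᶜ with hB'def
  have hA'comp : IsCompact A' := (hZclopen.isClosed.isCompact).image continuous_subtype_val
  have hB'comp : IsCompact B' :=
    ((hZclopen.compl.isClosed).isCompact).image continuous_subtype_val
  have hA'B'disj : Disjoint A' B' := by
    rw [Set.disjoint_left]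
    rintro x ⟨a, haZ, rfl⟩ ⟨b, hbZ, hba⟩
    exact hbZ (by rwa [Subtype.val_injective hba])
  have hunion : A' ∪ B' = K := by
    rw [hA'def, hB'def, ← Set.image_union, Set.union_compl_self, Set.image_univ,
      Subtype.range_coe]
  obtain ⟨OA, OB, hOAopen, hOBopen, hA'OA, hB'OB, hOdisj⟩ :=
    SeparatedNhds.of_isCompact_isCompact hA'comp hB'comp hA'B'disj
  refine ⟨OBᶜ, OAᶜ, hOBopen.isClosed_compl, hOAopen.isClosed_compl, ?_, ?_, ?_, ?_⟩
  · rw [← Set.compl_inter, Set.compl_univ_iff]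
    exact Set.disjoint_iff_inter_eq_empty.mp hOdisj.symm
  · refine ⟨u₁, ?_, hu₁⟩
    have : u₁ ∈ A' := ⟨p₁, hp₁Z, rfl⟩
    exact fun hmem => Set.disjoint_left.mp hOdisj (hA'OA this) hmem
  · refine ⟨u₂, ?_, hu₂U⟩
    have : u₂ ∈ B' := ⟨p₂, hp₂Z, rfl⟩
    exact fun hmem => Set.disjoint_left.mp hOdisj hmem (hB'OB this)
  · intro x hx
    by_contra hxV
    have hxK : x ∈ K := hxV
    rw [← hunion] at hxK
    rcases hxK with hxA | hxB
    · exact hx.2 (hA'OA hxA)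
    · exact hx.1 (hB'OB hxB)
end

section
/- If Y is a strongly indecomposable topological space and X is a dense subset of Y, then X (with the subspace topology) is strongly indecomposable. -/
/-- Strong indecomposability is inherited by dense subsets. -/
theorem stronglyIndecomposable_of_dense (Y : Type*) [TopologicalSpace Y]
    (hY : StronglyIndecomposable Y) (X : Set Y) (hX : Dense X) :
    StronglyIndecomposable X := by
  intro U V hU hV hUne hVne hdisj
  rw [isOpen_induced_iff] at hU hV
  obtain ⟨U', hU', rfl⟩ := hU
  obtain ⟨V', hV', rfl⟩ := hV
  -- U' and V' are disjoint in Y, since their (open) intersection misses the dense set X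
  have hdisjY : Disjoint U' V' := by
    rw [Set.disjoint_iff_inter_eq_empty]
    by_contra h
    obtain ⟨y, hy1, hy2⟩ := hX.inter_open_nonempty _ (hU'.inter hV')
      (Set.nonempty_iff_ne_empty.2 h)
    exact Set.disjoint_left.1 hdisj (show (⟨y, hy2⟩ : X) ∈ _ from hy1.1) hy1.2
  obtain ⟨x, hx⟩ := hUne
  obtain ⟨v, hv⟩ := hVne
  obtain ⟨A', B', hA', hB', hcov, hAU, hBU, hAB⟩ :=
    hY U' V' hU' hV' ⟨x, hx⟩ ⟨v, hv⟩ hdisjY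
  refine ⟨Subtype.val ⁻¹' A', Subtype.val ⁻¹' B',
    hA'.preimage continuous_subtype_val, hB'.preimage continuous_subtype_val, ?_, ?_, ?_, ?_⟩
  · ext z
    simp only [Set.mem_union, Set.mem_preimage, Set.mem_univ, iff_true]
    have := hcov ▸ Set.mem_univ (z : Y)
    exact (Set.mem_union _ _ _).1 (hcov.symm ▸ Set.mem_univ (z : Y))
  · -- find a point of X in U' \ B' ⊆ A' ∩ U'
    have hne : (U' ∩ B'ᶜ).Nonempty := by
      by_contra h
      have hsub : U' ⊆ B' := by
        intro y hy
        by_contra hyB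
        exact h ⟨y, hy, hyB⟩
      obtain ⟨a, haA, haU⟩ := hAU
      exact Set.disjoint_left.1 hdisjY haU (hAB ⟨haA, hsub haU⟩)
    obtain ⟨y, ⟨hyU, hyB⟩, hyX⟩ := hX.inter_open_nonempty _ (hU'.inter hB'.isOpen_compl) hne
    have hyA : y ∈ A' := by
      rcases (Set.mem_union _ _ _).1 (hcov.symm ▸ Set.mem_univ y) with h | h
      · exact h
      · exact absurd h hyB
    exact ⟨⟨y, hyX⟩, hyA, hyU⟩
  · have hne : (U' ∩ A'ᶜ).Nonempty := by
      by_contra h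
      have hsub : U' ⊆ A' := by
        intro y hy
        by_contra hyA
        exact h ⟨y, hy, hyA⟩
      obtain ⟨b, hbB, hbU⟩ := hBU
      exact Set.disjoint_left.1 hdisjY hbU (hAB ⟨hsub hbU, hbB⟩)
    obtain ⟨y, ⟨hyU, hyA⟩, hyX⟩ := hX.inter_open_nonempty _ (hU'.inter hA'.isOpen_compl) hne
    have hyB : y ∈ B' := by
      rcases (Set.mem_union _ _ _).1 (hcov.symm ▸ Set.mem_univ y) with h | h
      · exact absurd h hyA
      · exact h
    exact ⟨⟨y, hyX⟩, hyB, hyU⟩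
  · intro z hz
    exact hAB ⟨hz.1, hz.2⟩
end

section
/- Let X be a Tychonoff space. Then the Stone–Čech compactification βX is indecomposable (every connected subset of βX is dense or nowhere dense in βX) if and only if X is strongly indecomposable. -/
/-!
For closed `A`, `B` covering `X`, the closures of `A` and `B` in `βX` meet exactly in the closure
of `A ∩ B`: a map `f : βX → [0, 1]` equal to `1` on that closure and `0` at a point `p` can be
pasted with the constant `1` along `A ∩ B`, and the extension of the result to `βX` is `f` on
`cl A` but `1` on `cl B`, so `p` is not in both. Hence if `C ⊆ βX` is connected, `int (cl C)` is
nonempty and `N` is a closed neighbourhood of a point outside `cl C`, a strong decomposition of `X`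
relative to the traces of `int (cl C)` and `int N` covers `βX` by two closed sets meeting only
inside `N`; `C` lies in one of them, yet `int (cl C)` meets the other.

Conversely, if `U`, `V` admit no such decomposition, then the closure of `U` in `βX` lies in one
connected component `C` of the compact set `cl (X \ V)`: points of different components are
separated by disjoint open sets of `βX`, and their traces on `X` would decompose `X`. Since `X` is
completely regular, `C` has interior (it contains `cl U`) but misses `V`, so it is neither dense
nor nowhere dense.
-/

open Set

theorem exists_isOpen_separation_of_notMem_connectedComponentIn {Y : Type*} [TopologicalSpace Y]
    [T2Space Y] {Z : Set Y} (hZ : IsCompact Z) {y z : Y} (hy : y ∈ Z) (hz : z ∈ Z)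
    (hyz : z ∉ connectedComponentIn Z y) :
    ∃ O₁ O₂ : Set Y, IsOpen O₁ ∧ IsOpen O₂ ∧ Disjoint O₁ O₂ ∧ Z ⊆ O₁ ∪ O₂ ∧ y ∈ O₁ ∧ z ∈ O₂ := by
  have : CompactSpace Z := isCompact_iff_compactSpace.mp hZ
  have hz' : (⟨z, hz⟩ : Z) ∉ connectedComponent ⟨y, hy⟩ := fun h ↦
    hyz (connectedComponentIn_eq_image hy ▸ ⟨_, h, rfl⟩)
  rw [connectedComponent_eq_iInter_isClopen, mem_iInter] at hz'
  push Not at hz'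
  obtain ⟨⟨s, hs, hys⟩, hzs⟩ := hz'
  obtain ⟨O₁, O₂, hO₁, hO₂, hsO₁, hsO₂, hO⟩ := SeparatedNhds.of_isCompact_isCompact
    (hs.isClosed.isCompact.image continuous_subtype_val)
    (hs.compl.isClosed.isCompact.image continuous_subtype_val)
    ((disjoint_image_iff Subtype.val_injective).mpr disjoint_compl_right)
  refine ⟨O₁, O₂, hO₁, hO₂, hO, fun w hw ↦ ?_, hsO₁ ⟨_, hys, rfl⟩, hsO₂ ⟨_, hzs, rfl⟩⟩
  by_cases hws : (⟨w, hw⟩ : Z) ∈ s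
  · exact Or.inl (hsO₁ ⟨_, hws, rfl⟩)
  · exact Or.inr (hsO₂ ⟨_, hws, rfl⟩)

section StoneCech

variable {X : Type*} [TopologicalSpace X]

theorem closure_stoneCechUnit_image_union {A B : Set X} (hAB : A ∪ B = univ) :
    closure (stoneCechUnit '' A) ∪ closure (stoneCechUnit '' B) = univ := by
  rw [← closure_union, ← image_union, hAB, image_univ, denseRange_stoneCechUnit.closure_eq]

theorem closure_stoneCechUnit_image_inter {A B : Set X} (hA : IsClosed A) (hB : IsClosed B)
    (hAB : A ∪ B = univ) :
    closure (stoneCechUnit '' (A ∩ B)) =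
      closure (stoneCechUnit '' A) ∩ closure (stoneCechUnit '' B) := by
  refine (closure_mono (image_inter_subset _ _ _)).trans (closure_inter_subset_inter_closure _ _)
    |>.antisymm fun p ⟨hpA, hpB⟩ ↦ ?_
  by_contra hp
  obtain ⟨f, hf, hfp, hf1⟩ :=
    CompletelyRegularSpace.completely_regular p _ isClosed_closure hp
  have hf1 : ∀ x ∈ A ∩ B, f (stoneCechUnit x) = 1 := fun x hx ↦
    hf1 (subset_closure (mem_image_of_mem _ hx))
  classical
  set g : X → unitInterval := A.piecewise (f ∘ stoneCechUnit) 1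
  have hg1 : ∀ x ∈ B, g x = 1 := fun x hx ↦ by
    by_cases hxA : x ∈ A
    · exact (piecewise_eq_of_mem _ _ _ hxA).trans (hf1 x ⟨hxA, hx⟩)
    · exact piecewise_eq_of_notMem _ _ _ hxA
  have hg : Continuous g := by
    rw [← continuousOn_univ, ← hAB]
    refine ContinuousOn.union_of_isClosed ?_ ?_ hA hB
    · exact (hf.comp continuous_stoneCechUnit).continuousOn.congr fun x hx ↦
        piecewise_eq_of_mem _ _ _ hx
    · exact (continuousOn_const (c := 1)).congr hg1
  have hgA : EqOn (stoneCechExtend hg) f (closure (stoneCechUnit '' A)) := by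
    refine EqOn.closure ?_ (continuous_stoneCechExtend hg) hf
    rintro _ ⟨x, hx, rfl⟩
    rw [stoneCechExtend_stoneCechUnit]
    exact piecewise_eq_of_mem _ _ _ hx
  have hgB : EqOn (stoneCechExtend hg) 1 (closure (stoneCechUnit '' B)) := by
    refine EqOn.closure ?_ (continuous_stoneCechExtend hg) continuous_const
    rintro _ ⟨x, hx, rfl⟩
    rw [stoneCechExtend_stoneCechUnit]
    exact hg1 x hx
  have h01 : (0 : unitInterval) = 1 := by rw [← hfp, ← hgA hpA, hgB hpB, Pi.one_apply]
  exact zero_ne_one h01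

theorem stoneCechUnit_mem_closure_image_iff [CompletelyRegularSpace X] {s : Set X} {x : X} :
    stoneCechUnit x ∈ closure (stoneCechUnit '' s) ↔ x ∈ closure s := by
  rw [isInducing_stoneCechUnit.closure_eq_preimage_closure_image s, mem_preimage]

theorem stoneCechUnit_mem_interior_closure_image [CompletelyRegularSpace X] {U : Set X}
    (hU : IsOpen U) {x : X} (hx : x ∈ U) :
    stoneCechUnit x ∈ interior (closure (stoneCechUnit '' U)) := by
  refine interior_maximal (t := (closure (stoneCechUnit '' Uᶜ))ᶜ) (fun y hy ↦ ?_)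
    isClosed_closure.isOpen_compl ?_
  · have hy' := (closure_stoneCechUnit_image_union (union_compl_self U)).symm ▸ mem_univ y
    exact hy'.resolve_right hy
  · rw [mem_compl_iff, stoneCechUnit_mem_closure_image_iff, hU.isClosed_compl.closure_eq]
    exact not_not_intro hx

theorem exists_closed_cover_of_notMem_connectedComponentIn {U V : Set X} (hUV : Disjoint U V)
    {x₀ : X} (hx₀ : x₀ ∈ U) {q : StoneCech X} (hq : q ∈ closure (stoneCechUnit '' U))
    (hqC : q ∉ connectedComponentIn (closure (stoneCechUnit '' Vᶜ)) (stoneCechUnit x₀)) :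
    ∃ A B : Set X, IsClosed A ∧ IsClosed B ∧ A ∪ B = univ ∧
      (A ∩ U).Nonempty ∧ (B ∩ U).Nonempty ∧ A ∩ B ⊆ V := by
  have hUZ : stoneCechUnit '' U ⊆ closure (stoneCechUnit '' Vᶜ) :=
    (image_mono hUV.subset_compl_right).trans subset_closure
  obtain ⟨O₁, O₂, hO₁, hO₂, hO, hZO, hx₀O₁, hqO₂⟩ :=
    exists_isOpen_separation_of_notMem_connectedComponentIn isClosed_closure.isCompact
      (hUZ ⟨x₀, hx₀, rfl⟩) (closure_minimal hUZ isClosed_closure hq) hqC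
  obtain ⟨_, hbO₂, b, hbU, rfl⟩ := mem_closure_iff.mp hq O₂ hO₂ hqO₂
  refine ⟨stoneCechUnit ⁻¹' O₂ᶜ, stoneCechUnit ⁻¹' O₁ᶜ,
    hO₂.isClosed_compl.preimage continuous_stoneCechUnit,
    hO₁.isClosed_compl.preimage continuous_stoneCechUnit, ?_,
    ⟨x₀, hO.notMem_of_mem_left hx₀O₁, hx₀⟩, ⟨b, hO.notMem_of_mem_right hbO₂, hbU⟩, ?_⟩
  · rw [← preimage_union, ← compl_inter, hO.symm.inter_eq, compl_empty, preimage_univ]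
  · rintro x ⟨hx₂, hx₁⟩
    by_contra hxV
    exact (hZO (subset_closure ⟨x, hxV, rfl⟩)).elim hx₁ hx₂

theorem StronglyIndecomposable.of_indecomposableSpace_stoneCech [CompletelyRegularSpace X]
    (h : IndecomposableSpace (StoneCech X)) : StronglyIndecomposable X := by
  intro U V hU hV ⟨x₀, hx₀⟩ ⟨v, hv⟩ hUV
  by_contra hno
  set Z := closure (stoneCechUnit '' Vᶜ)
  set C := connectedComponentIn Z (stoneCechUnit x₀)
  have hUC : closure (stoneCechUnit '' U) ⊆ C := fun q hq ↦ by_contra fun hqC ↦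
    hno (exists_closed_cover_of_notMem_connectedComponentIn hUV hx₀ hq hqC)
  have hC : IsConnected C := isConnected_connectedComponentIn_iff.mpr
    (subset_closure ⟨x₀, hUV.subset_compl_right hx₀, rfl⟩)
  rcases h C hC with hdense | hnd
  · have hvZ : stoneCechUnit v ∈ Z :=
      closure_minimal (connectedComponentIn_subset _ _) isClosed_closure (hdense _)
    rw [stoneCechUnit_mem_closure_image_iff, hV.isClosed_compl.closure_eq] at hvZ
    exact hvZ hv
  · have hx₀C := interior_mono (hUC.trans subset_closure)
      (stoneCechUnit_mem_interior_closure_image hU hx₀)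
    rwa [hnd] at hx₀C

theorem StronglyIndecomposable.indecomposableSpace_stoneCech (h : StronglyIndecomposable X) :
    IndecomposableSpace (StoneCech X) := by
  intro C hC
  rw [or_iff_not_and_not]
  rintro ⟨hnd, hnnd⟩
  obtain ⟨p, hp⟩ : ∃ p, p ∉ closure C := not_forall.mp hnd
  obtain ⟨N, ⟨hNp, hNcl⟩, hNC⟩ :=
    (closed_nhds_basis p).mem_iff.mp (isClosed_closure.isOpen_compl.mem_nhds hp)
  have hCN : Disjoint (closure C) N := disjoint_compl_right.mono_right hNC
  obtain ⟨A, B, hA, hB, hAB, ⟨a, haA, haC⟩, ⟨b, hbB, hbC⟩, hABN⟩ :=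
    h (stoneCechUnit ⁻¹' interior (closure C)) (stoneCechUnit ⁻¹' interior N)
      (isOpen_interior.preimage continuous_stoneCechUnit)
      (isOpen_interior.preimage continuous_stoneCechUnit)
      (denseRange_stoneCechUnit.exists_mem_open isOpen_interior (nonempty_iff_ne_empty.mpr hnnd))
      (denseRange_stoneCechUnit.exists_mem_open isOpen_interior
        ⟨p, mem_interior_iff_mem_nhds.mpr hNp⟩)
      ((hCN.mono interior_subset interior_subset).preimage _)
  have hmeet : closure C ∩ (closure (stoneCechUnit '' A) ∩ closure (stoneCechUnit '' B)) = ∅ := by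
    rw [← closure_stoneCechUnit_image_inter hA hB hAB]
    refine (hCN.mono_right (closure_minimal ?_ hNcl)).inter_eq
    exact image_subset_iff.mpr (hABN.trans (preimage_mono interior_subset))
  rcases isPreconnected_iff_subset_of_disjoint_closed.mp hC.isPreconnected _ _
    isClosed_closure isClosed_closure ((closure_stoneCechUnit_image_union hAB).symm ▸ subset_univ C)
    (subset_eq_empty (inter_subset_inter_left _ subset_closure) hmeet) with hCA | hCB
  · exact hmeet.subset ⟨interior_subset hbC,
      closure_minimal hCA isClosed_closure (interior_subset hbC), subset_closure ⟨b, hbB, rfl⟩⟩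
  · exact hmeet.subset ⟨interior_subset haC, subset_closure ⟨a, haA, rfl⟩,
      closure_minimal hCB isClosed_closure (interior_subset haC)⟩

end StoneCech

/-- For a Tychonoff space `X`, the Stone–Čech compactification `βX` is indecomposable
iff `X` is strongly indecomposable. -/
theorem stoneCech_indecomposable_iff (X : Type) [TopologicalSpace X] [T35Space X] :
    IndecomposableSpace (StoneCech X) ↔ StronglyIndecomposable X :=
  ⟨StronglyIndecomposable.of_indecomposableSpace_stoneCech,
    StronglyIndecomposable.indecomposableSpace_stoneCech⟩
end

section
/- Let X be a Tychonoff space. An open subset U of βX is connected if and only if U ∩ X is connected. -/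
open Set

/-- Key lemma: if `U ⊆ βX` is open and `A`, `B` are disjoint open subsets of `X` whose union
is the trace of `U` on `X`, then no point of `U` can belong to the closures (in `βX`) of the
images of both `A` and `B`. -/
lemma stoneCech_closure_inter_empty (X : Type) [TopologicalSpace X]
    (U : Set (StoneCech X)) (hU : IsOpen U) (A B : Set X) (hA : IsOpen A) (hB : IsOpen B)
    (hAB : Disjoint A B)
    (hcover : A ∪ B = (stoneCechUnit : X → StoneCech X) ⁻¹' U) {p : StoneCech X}
    (hpU : p ∈ U) (hpA : p ∈ closure (stoneCechUnit '' A))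
    (hpB : p ∈ closure (stoneCechUnit '' B)) : False := by
  classical
  -- Urysohn function on `βX`: `f p = 1`, `f = 0` off `U`.
  obtain ⟨f, hf0, hf1, hf01⟩ :=
    exists_continuous_zero_one_of_isClosed (X := StoneCech X)
      hU.isClosed_compl isClosed_singleton
      (disjoint_singleton_right.mpr (fun h => h hpU) : Disjoint Uᶜ {p})
  have hfι : Continuous fun x : X => f (stoneCechUnit x) :=
    f.continuous.comp continuous_stoneCechUnit
  -- the bounded function on `X` that is `f ∘ ι` on `A` and `0` elsewhere
  set hr : X → ℝ := fun x => if x ∈ A then f (stoneCechUnit x) else 0 with hr_def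
  have hr_nonneg : ∀ x, 0 ≤ hr x := by
    intro x
    by_cases hx : x ∈ A <;> simp [hr_def, hx, (hf01 _).1]
  have hr_le : ∀ x, hr x ≤ f (stoneCechUnit x) := by
    intro x
    by_cases hx : x ∈ A <;> simp [hr_def, hx, (hf01 _).1]
  have hr_mem : ∀ x, hr x ∈ Icc (0 : ℝ) 1 := fun x =>
    ⟨hr_nonneg x, (hr_le x).trans (hf01 _).2⟩
  have hr_cont : Continuous hr := by
    rw [continuous_iff_continuousAt]
    intro x
    by_cases hxA : x ∈ A
    · exact hfι.continuousAt.congr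
        (Filter.eventuallyEq_of_mem (hA.mem_nhds hxA) fun y hy => if_pos hy).symm
    by_cases hxB : x ∈ B
    · -- `hr = 0` on the open set `B`
      have : ContinuousAt (fun _ : X => (0 : ℝ)) x := continuousAt_const
      refine this.congr (Filter.eventuallyEq_of_mem (hB.mem_nhds hxB) fun y hy => ?_).symm
      exact if_neg fun hyA => hAB.ne_of_mem hyA hy rfl
    · -- squeeze: `0 ≤ hr ≤ f ∘ ι` and `f (ι x) = 0`
      have hxU : stoneCechUnit x ∉ U := by
        have hx : x ∉ A ∪ B := fun h => h.elim hxA hxB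
        rwa [hcover] at hx
      have hfx : f (stoneCechUnit x) = 0 := hf0 hxU
      have h0 : hr x = 0 := if_neg hxA
      rw [ContinuousAt, h0]
      exact tendsto_of_tendsto_of_tendsto_of_le_of_le tendsto_const_nhds
        (hfx ▸ (hfι.continuousAt :
          Filter.Tendsto (fun y : X => f (stoneCechUnit y)) (nhds x)
            (nhds (f (stoneCechUnit x))))) hr_nonneg hr_le
  -- package into the unit interval and extend to `βX`
  set h : X → Icc (0 : ℝ) 1 := fun x => ⟨hr x, hr_mem x⟩ with h_def
  have h_cont : Continuous h := hr_cont.subtype_mk hr_mem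
  set H : StoneCech X → Icc (0 : ℝ) 1 := stoneCechExtend h_cont with H_def
  have H_cont : Continuous H := continuous_stoneCechExtend h_cont
  have H_ext : ∀ x : X, H (stoneCechUnit x) = h x := fun x =>
    congrFun (stoneCechExtend_extends h_cont) x
  -- `(↑) ∘ H` agrees with `f` on `closure (ι '' A)`
  have eqA : EqOn (fun q => (H q : ℝ)) f (closure (stoneCechUnit '' A)) := by
    apply EqOn.closure _ (continuous_subtype_val.comp H_cont) f.continuous
    rintro q ⟨a, haA, rfl⟩
    simp [H_ext a, h_def, hr_def, if_pos haA]
  -- `(↑) ∘ H` agrees with `0` on `closure (ι '' B)`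
  have eqB : EqOn (fun q => (H q : ℝ)) (fun _ => (0 : ℝ)) (closure (stoneCechUnit '' B)) := by
    apply EqOn.closure _ (continuous_subtype_val.comp H_cont) continuous_const
    rintro q ⟨b, hbB, rfl⟩
    have hbA : b ∉ A := fun hbA => hAB.ne_of_mem hbA hbB rfl
    simp [H_ext b, h_def, hr_def, if_neg hbA]
  have h1 : (H p : ℝ) = 1 := by simpa using (eqA hpA).trans (hf1 rfl)
  have h0 : (H p : ℝ) = 0 := by simpa using eqB hpB
  rw [h1] at h0
  exact one_ne_zero h0

/-- An open subset `U` of `βX` is connected iff `U ∩ X` is connected. -/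
theorem isConnected_open_stoneCech_iff (X : Type) [TopologicalSpace X] [T35Space X]
    (U : Set (StoneCech X)) (hU : IsOpen U) :
    IsConnected U ↔ IsConnected ((stoneCechUnit : X → StoneCech X) ⁻¹' U) := by
  set ι : X → StoneCech X := stoneCechUnit with ι_def
  have hιc : Continuous ι := continuous_stoneCechUnit
  have hdense : DenseRange ι := denseRange_stoneCechUnit
  have himg : ι '' (ι ⁻¹' U) = U ∩ range ι := image_preimage_eq_inter_range
  have hUsub : U ⊆ closure (U ∩ range ι) := hdense.open_subset_closure_inter hU
  constructor
  · rintro ⟨hne, hpre⟩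
    -- nonempty
    obtain ⟨x, hx⟩ : ∃ x, ι x ∈ U := hdense.exists_mem_open hU hne
    refine ⟨⟨x, hx⟩, ?_⟩
    rw [isPreconnected_iff_subset_of_disjoint]
    intro u v hu hv hsub hdisj
    set A : Set X := ι ⁻¹' U ∩ u with A_def
    set B : Set X := ι ⁻¹' U ∩ v with B_def
    have hAopen : IsOpen A := (hU.preimage hιc).inter hu
    have hBopen : IsOpen B := (hU.preimage hιc).inter hv
    have hABdisj : Disjoint A B := by
      rw [disjoint_iff_inter_eq_empty]
      rw [← subset_empty_iff, ← hdisj]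
      intro y ⟨⟨hy1, hy2⟩, ⟨_, hy3⟩⟩
      exact ⟨hy1, hy2, hy3⟩
    have hABcover : A ∪ B = ι ⁻¹' U := by
      rw [A_def, B_def, ← inter_union_distrib_left]
      exact inter_eq_left.mpr hsub
    rcases A.eq_empty_or_nonempty with hAe | hAne
    · right
      intro y hy
      have : y ∈ A ∪ B := by rw [hABcover]; exact hy
      rcases this with h | h
      · exact absurd h (hAe ▸ notMem_empty y)
      · exact h.2
    rcases B.eq_empty_or_nonempty with hBe | hBne
    · left
      intro y hy
      have : y ∈ A ∪ B := by rw [hABcover]; exact hy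
      rcases this with h | h
      · exact h.2
      · exact absurd h (hBe ▸ notMem_empty y)
    -- both nonempty: derive a contradiction
    exfalso
    have hUsub2 : U ⊆ closure (ι '' A) ∪ closure (ι '' B) := by
      intro q hq
      have : q ∈ closure (ι '' A ∪ ι '' B) := by
        rw [← image_union, hABcover, himg]
        exact hUsub hq
      rwa [closure_union] at this
    have := isPreconnected_iff_subset_of_disjoint_closed.mp hpre
      (closure (ι '' A)) (closure (ι '' B)) isClosed_closure isClosed_closure hUsub2
      (by
        rw [eq_empty_iff_forall_notMem]
        rintro q ⟨hqU, hqA, hqB⟩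
        exact stoneCech_closure_inter_empty X U hU A B hAopen hBopen hABdisj hABcover
          hqU hqA hqB)
    rcases this with hsubA | hsubB
    · obtain ⟨b, hbB⟩ := hBne
      exact stoneCech_closure_inter_empty X U hU A B hAopen hBopen hABdisj hABcover
        hbB.1 (hsubA hbB.1) (subset_closure (mem_image_of_mem ι hbB))
    · obtain ⟨a, haA⟩ := hAne
      exact stoneCech_closure_inter_empty X U hU A B hAopen hBopen hABdisj hABcover
        haA.1 (subset_closure (mem_image_of_mem ι haA)) (hsubB haA.1)
  · rintro ⟨⟨x, hx⟩, hpre⟩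
    refine ⟨⟨ι x, hx⟩, ?_⟩
    have himgpre : IsPreconnected (ι '' (ι ⁻¹' U)) := hpre.image ι hιc.continuousOn
    refine himgpre.subset_closure (himg ▸ inter_subset_left) ?_
    rw [himg]
    exact hUsub
end

section
/- Let X be a connected Tychonoff space. If some Hausdorff compactification γX of X is irreducible (irreducible between two of its points), then βX is irreducible. -/
/-- A connected space is *irreducible between `p` and `q`* if no proper closed
connected subset contains both. -/
def IrreducibleBetween {Z : Type*} [TopologicalSpace Z] (p q : Z) : Prop :=
  ∀ C : Set Z, IsClosed C → IsPreconnected C → p ∈ C → q ∈ C → C = Set.univ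

/-- A space is *irreducible* if it is irreducible between some two of its points. -/
def IrreducibleSpace' (Z : Type*) [TopologicalSpace Z] : Prop :=
  ∃ p q : Z, IrreducibleBetween p q

/-- The Stone–Čech extension maps the remainder to the remainder: if `f z = e x`
then `z = stoneCechUnit x`. -/
lemma eq_stoneCechUnit_of_extend_eq
    (X : Type) [TopologicalSpace X]
    (γ : Type) [TopologicalSpace γ] [CompactSpace γ] [T2Space γ]
    (e : X → γ) (he : Topology.IsEmbedding e)
    {z : StoneCech X} {x : X}
    (hz : stoneCechExtend he.continuous z = e x) : z = stoneCechUnit x := by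
  by_contra hne
  obtain ⟨U, V, hU, hV, hzU, hxV, hUV⟩ := t2_separation hne
  obtain ⟨t, htz, htc, htU⟩ := exists_mem_nhds_isClosed_subset (hU.mem_nhds hzU)
  set W := interior t with hW
  have hzW : z ∈ W := mem_interior_iff_mem_nhds.2 htz
  set A : Set X := stoneCechUnit ⁻¹' W with hA
  -- z is in the closure of the image of A
  have h1 : z ∈ closure (stoneCechUnit '' A) :=
    denseRange_stoneCechUnit.subset_closure_image_preimage_of_isOpen isOpen_interior hzW
  -- hence e x = f z ∈ closure (e '' A)
  have h2 : e x ∈ closure (e '' A) := by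
    have himg : stoneCechExtend he.continuous '' closure (stoneCechUnit '' A)
        ⊆ closure (stoneCechExtend he.continuous '' (stoneCechUnit '' A)) :=
      image_closure_subset_closure_image (continuous_stoneCechExtend he.continuous)
    have : stoneCechExtend he.continuous z
        ∈ closure (stoneCechExtend he.continuous '' (stoneCechUnit '' A)) :=
      himg ⟨z, h1, rfl⟩
    rw [← Set.image_comp, stoneCechExtend_extends he.continuous] at this
    rwa [hz] at this
  -- but x is not in the closure of A
  have h3 : x ∉ closure A := by
    intro hx
    have : stoneCechUnit x ∈ closure (stoneCechUnit '' A) :=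
      image_closure_subset_closure_image continuous_stoneCechUnit ⟨x, hx, rfl⟩
    have hsub : closure (stoneCechUnit '' A) ⊆ U := by
      calc closure (stoneCechUnit '' A) ⊆ closure W :=
            closure_mono (Set.image_preimage_subset _ _)
        _ ⊆ closure t := closure_mono interior_subset
        _ = t := htc.closure_eq
        _ ⊆ U := htU
    exact hUV.le_bot ⟨hsub this, hxV⟩
  rw [he.closure_eq_preimage_closure_image] at h3
  exact h3 h2

/-- If a connected Tychonoff space has an irreducible compactification, then its
Stone–Čech compactification is irreducible. -/
theorem stoneCech_irreducible_of_irreducible_compactification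
    (X : Type) [TopologicalSpace X] [T35Space X] [ConnectedSpace X]
    (γ : Type) [TopologicalSpace γ] [CompactSpace γ] [T2Space γ]
    (e : X → γ) (he : Topology.IsEmbedding e) (hd : DenseRange e)
    (hirr : IrreducibleSpace' γ) :
    IrreducibleSpace' (StoneCech X) := by
  obtain ⟨p, q, hpq⟩ := hirr
  set f : StoneCech X → γ := stoneCechExtend he.continuous with hf
  have hfc : Continuous f := continuous_stoneCechExtend he.continuous
  have hfe : ∀ x : X, f (stoneCechUnit x) = e x := fun x =>
    congrFun (stoneCechExtend_extends he.continuous) x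
  -- f is surjective
  have hfs : Function.Surjective f := by
    have hclosed : IsClosed (Set.range f) :=
      (isCompact_range hfc).isClosed
    have hdense : Dense (Set.range f) := by
      apply Dense.mono _ hd
      rintro y ⟨x, rfl⟩
      exact ⟨stoneCechUnit x, hfe x⟩
    have : Set.range f = Set.univ := hclosed.closure_eq ▸ hdense.closure_eq
    exact Set.range_eq_univ.mp this
  obtain ⟨p', hp'⟩ := hfs p
  obtain ⟨q', hq'⟩ := hfs q
  refine ⟨p', q', fun C hC hCconn hpC hqC => ?_⟩
  -- the image of C is closed, preconnected and contains p and q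
  have himgC : f '' C = Set.univ := by
    apply hpq
    · exact ((hC.isCompact).image hfc).isClosed
    · exact hCconn.image f hfc.continuousOn
    · exact ⟨p', hpC, hp'⟩
    · exact ⟨q', hqC, hq'⟩
  -- hence the (dense) range of stoneCechUnit is contained in C
  have hsub : Set.range (stoneCechUnit : X → StoneCech X) ⊆ C := by
    rintro _ ⟨x, rfl⟩
    have : e x ∈ f '' C := himgC ▸ Set.mem_univ _
    obtain ⟨z, hzC, hzx⟩ := this
    rwa [eq_stoneCechUnit_of_extend_eq X γ e he hzx] at hzC
  have hcl : closure (Set.range (stoneCechUnit : X → StoneCech X)) = Set.univ :=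
    (denseRange_stoneCechUnit (α := X)).closure_eq
  rw [← hC.closure_eq]
  exact Set.eq_univ_of_univ_subset (hcl ▸ closure_mono hsub)
end

section
/- Let X be a connected Tychonoff space. If X has a Hausdorff compactification that is indecomposable, then βX is indecomposable. -/
open Set Topology


/-- Key `γ`-side lemma: in an indecomposable continuum, the complement of a nonempty
open set `V` can be covered by two disjoint closed sets, each containing an open set
meeting a given nonempty open `U` disjoint from `V`. -/
lemma gamma_split {γ : Type} [TopologicalSpace γ] [CompactSpace γ] [T2Space γ]
    (hγ : IndecomposableSpace γ) (U V : Set γ) (hU : IsOpen U) (_hV : IsOpen V)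
    (hUne : U.Nonempty) (hVne : V.Nonempty) (hUV : U ∩ V = ∅) :
    ∃ LA LB WA WB : Set γ, IsClosed LA ∧ IsClosed LB ∧ Disjoint LA LB ∧
      Vᶜ ⊆ LA ∪ LB ∧ IsOpen WA ∧ IsOpen WB ∧ WA ⊆ LA ∧ WB ⊆ LB ∧
      (WA ∩ U).Nonempty ∧ (WB ∩ U).Nonempty := by
  set K : Set γ := Vᶜ with hK
  have hKc : IsClosed K := _hV.isClosed_compl
  have hUK : U ⊆ K := fun x hx hxV => by
    have : x ∈ U ∩ V := ⟨hx, hxV⟩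
    rw [hUV] at this; exact this
  haveI : CompactSpace K := isCompact_iff_compactSpace.mp hKc.isCompact
  -- first produce a relatively clopen partition of K, both parts meeting U
  have hpart : ∃ KA KB : Set γ, IsClosed KA ∧ IsClosed KB ∧ Disjoint KA KB ∧
      K ⊆ KA ∪ KB ∧ (KA ∩ U).Nonempty ∧ (KB ∩ U).Nonempty := by
    by_cases hp : ∃ Z : Set K, IsClopen Z ∧ ((↑) ⁻¹' U ∩ Z).Nonempty ∧
        ((↑) ⁻¹' U ∩ Zᶜ).Nonempty
    · obtain ⟨Z, hZ, ⟨a, haU, haZ⟩, ⟨b, hbU, hbZ⟩⟩ := hp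
      refine ⟨(↑) '' Z, (↑) '' Zᶜ, ?_, ?_, ?_, ?_, ⟨a, ⟨a, haZ, rfl⟩, haU⟩,
        ⟨b, ⟨b, hbZ, rfl⟩, hbU⟩⟩
      · exact (hZ.isClosed.isCompact.image continuous_subtype_val).isClosed
      · exact (hZ.compl.isClosed.isCompact.image continuous_subtype_val).isClosed
      · exact (Set.disjoint_image_iff Subtype.val_injective).mpr disjoint_compl_right
      · intro x hx
        rcases (em ((⟨x, hx⟩ : K) ∈ Z)) with h | h
        · exact Or.inl ⟨⟨x, hx⟩, h, rfl⟩
        · exact Or.inr ⟨⟨x, hx⟩, h, rfl⟩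
    · exfalso
      push_neg at hp
      obtain ⟨xx, hxx⟩ := hUne
      set x₀ : K := ⟨xx, hUK hxx⟩
      have hsub : ((↑) ⁻¹' U : Set K) ⊆ connectedComponent x₀ := by
        rw [connectedComponent_eq_iInter_isClopen x₀]
        refine subset_iInter fun Z => ?_
        obtain ⟨Z, hZcl, hxZ⟩ := Z
        intro u hu
        by_contra hun
        have := hp Z hZcl ⟨x₀, hxx, hxZ⟩
        rw [Set.eq_empty_iff_forall_notMem] at this
        exact this u ⟨hu, hun⟩
      have hconn : IsConnected ((↑) '' connectedComponent x₀ : Set γ) :=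
        isConnected_connectedComponent.image _ continuous_subtype_val.continuousOn
      have hUS : U ⊆ (↑) '' connectedComponent x₀ := by
        intro u hu
        exact ⟨⟨u, hUK hu⟩, hsub hu, rfl⟩
      rcases hγ _ hconn with hdense | hnwd
      · obtain ⟨v, hv⟩ := hVne
        have hclK : closure ((↑) '' connectedComponent x₀ : Set γ) ⊆ K :=
          hKc.closure_subset_iff.mpr (by rintro _ ⟨z, _, rfl⟩; exact z.2)
        have : v ∈ K := hclK (hdense v)
        exact this hv
      · have : U ⊆ interior (closure ((↑) '' connectedComponent x₀ : Set γ)) :=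
          interior_maximal (hUS.trans subset_closure) hU |>.trans (le_refl _)
        rw [hnwd] at this
        exact (this hxx).elim
  obtain ⟨KA, KB, hKAc, hKBc, hKAB, hKcov, ⟨a, haA, haU⟩, ⟨b, hbB, hbU⟩⟩ := hpart
  obtain ⟨f, hf0, hf1, hf01⟩ := exists_continuous_zero_one_of_isClosed hKAc hKBc hKAB
  refine ⟨f ⁻¹' Iic (1/3 : ℝ), f ⁻¹' Ici (2/3 : ℝ), f ⁻¹' Iio (1/3 : ℝ),
      f ⁻¹' Ioi (2/3 : ℝ), isClosed_Iic.preimage f.continuous,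
      isClosed_Ici.preimage f.continuous, ?_, ?_,
      isOpen_Iio.preimage f.continuous, isOpen_Ioi.preimage f.continuous,
      Set.preimage_mono Set.Iio_subset_Iic_self, Set.preimage_mono Set.Ioi_subset_Ici_self,
      ⟨a, by simpa [hf0 haA] using (by norm_num : (0:ℝ) < 1/3), haU⟩,
      ⟨b, by simpa [hf1 hbB] using (by norm_num : (2:ℝ)/3 < 1), hbU⟩⟩
  · rw [Set.disjoint_left]
    intro x hx1 hx2
    simp only [mem_preimage, mem_Iic, mem_Ici] at hx1 hx2
    linarith
  · intro x hx
    rcases hKcov hx with h | h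
    · refine Or.inl ?_
      simp only [mem_preimage, mem_Iic, hf0 h, Pi.zero_apply]
      norm_num
    · refine Or.inr ?_
      simp only [mem_preimage, mem_Ici, hf1 h, Pi.one_apply]
      norm_num

/-- If a connected Tychonoff space has an indecomposable compactification, then its
Stone–Čech compactification is indecomposable. -/
theorem stoneCech_indecomposable_of_indecomposable_compactification
    (X : Type) [TopologicalSpace X] [T35Space X] [ConnectedSpace X]
    (γ : Type) [TopologicalSpace γ] [CompactSpace γ] [T2Space γ]
    (e : X → γ) (he : Topology.IsEmbedding e) (hd : DenseRange e)
    (hγ : IndecomposableSpace γ) :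
    IndecomposableSpace (StoneCech X) := by
  intro C hC
  by_contra hcon
  push_neg at hcon
  obtain ⟨hnd, hnwd⟩ := hcon
  set D : Set (StoneCech X) := closure C with hD
  have hDconn : IsConnected D := hC.closure
  have hDcl : IsClosed D := isClosed_closure
  have hDne : D ≠ univ := fun h => hnd (dense_iff_closure_eq.mpr h)
  have hUne : (interior D).Nonempty := by
    rw [Set.nonempty_iff_ne_empty]
    exact fun h => hnwd h
  set U : Set (StoneCech X) := interior D with hU
  -- a point outside D and an open set around it with closure missing D
  obtain ⟨p, hp⟩ : ∃ p, p ∉ D := by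
    by_contra h
    push_neg at h
    exact hDne (eq_univ_of_forall h)
  obtain ⟨o, v, ho, hv, hDo, hpv, hov⟩ :=
    NormalSpace.normal D {p} hDcl isClosed_singleton
      (Set.disjoint_singleton_right.mpr hp)
  have hpv' : p ∈ v := hpv rfl
  have hclvD : closure v ∩ D = ∅ := by
    have h1 : closure v ⊆ oᶜ :=
      closure_minimal (fun x hx hxo => Set.disjoint_left.mp hov hxo hx) ho.isClosed_compl
    rw [Set.eq_empty_iff_forall_notMem]
    rintro x ⟨hx1, hx2⟩
    exact h1 hx1 (hDo hx2)
  -- transfer to X and γ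
  set ι : X → StoneCech X := stoneCechUnit with hι
  have hdι : DenseRange ι := denseRange_stoneCechUnit
  have hUopen : IsOpen U := isOpen_interior
  have hUXne : (ι ⁻¹' U).Nonempty := by
    obtain ⟨x, hx⟩ := hdι.exists_mem_open hUopen hUne
    exact ⟨x, hx⟩
  have hVXne : (ι ⁻¹' v).Nonempty := by
    obtain ⟨x, hx⟩ := hdι.exists_mem_open hv ⟨p, hpv'⟩
    exact ⟨x, hx⟩
  have hUXopen : IsOpen (ι ⁻¹' U) := hUopen.preimage continuous_stoneCechUnit
  have hVXopen : IsOpen (ι ⁻¹' v) := hv.preimage continuous_stoneCechUnit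
  obtain ⟨Uh, hUh, hUhpre⟩ := he.toIsInducing.isOpen_iff.mp hUXopen
  obtain ⟨Vh, hVh, hVhpre⟩ := he.toIsInducing.isOpen_iff.mp hVXopen
  have hUhne : Uh.Nonempty := by
    obtain ⟨x, hx⟩ := hUXne
    rw [← hUhpre] at hx
    exact ⟨e x, hx⟩
  have hVhne : Vh.Nonempty := by
    obtain ⟨x, hx⟩ := hVXne
    rw [← hVhpre] at hx
    exact ⟨e x, hx⟩
  have hUD : U ⊆ D := interior_subset
  have hUv : U ∩ v = ∅ := by
    rw [Set.eq_empty_iff_forall_notMem]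
    rintro x ⟨hx1, hx2⟩
    rw [Set.eq_empty_iff_forall_notMem] at hclvD
    exact hclvD x ⟨subset_closure hx2, hUD hx1⟩
  have hUVh : Uh ∩ Vh = ∅ := by
    rw [Set.eq_empty_iff_forall_notMem]
    rintro y ⟨hy1, hy2⟩
    obtain ⟨x, hx⟩ := hd.exists_mem_open (hUh.inter hVh) ⟨y, hy1, hy2⟩
    have hx1 : x ∈ ι ⁻¹' U := by rw [← hUhpre]; exact hx.1
    have hx2 : x ∈ ι ⁻¹' v := by rw [← hVhpre]; exact hx.2
    rw [Set.eq_empty_iff_forall_notMem] at hUv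
    exact hUv (ι x) ⟨hx1, hx2⟩
  -- apply the γ-side lemma
  obtain ⟨LA, LB, WA, WB, hLAc, hLBc, hLAB, hLcov, hWAo, hWBo, hWALA, hWBLB,
      hWAU, hWBU⟩ := gamma_split hγ Uh Vh hUh hVh hUhne hVhne hUVh
  -- the Stone–Čech extension of e
  set π : StoneCech X → γ := stoneCechExtend he.continuous with hπ
  have hπcont : Continuous π := continuous_stoneCechExtend he.continuous
  have hπι : ∀ x, π (ι x) = e x := fun x =>
    congrFun (stoneCechExtend_extends he.continuous) x
  set KA : Set (StoneCech X) := closure (ι '' (e ⁻¹' LA)) with hKA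
  set KB : Set (StoneCech X) := closure (ι '' (e ⁻¹' LB)) with hKB
  have hKAsub : KA ⊆ π ⁻¹' LA := by
    refine closure_minimal ?_ (hLAc.preimage hπcont)
    rintro _ ⟨a, ha, rfl⟩
    simp only [Set.mem_preimage, hπι]
    exact ha
  have hKBsub : KB ⊆ π ⁻¹' LB := by
    refine closure_minimal ?_ (hLBc.preimage hπcont)
    rintro _ ⟨a, ha, rfl⟩
    simp only [Set.mem_preimage, hπι]
    exact ha
  have hKdisj : Disjoint KA KB :=
    Set.disjoint_of_subset hKAsub hKBsub (hLAB.preimage π)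
  -- each meets U (hence D)
  have hKAU : (KA ∩ U).Nonempty := by
    obtain ⟨x, hx⟩ := hd.exists_mem_open (hWAo.inter hUh) hWAU
    refine ⟨ι x, subset_closure ⟨x, hWALA hx.1, rfl⟩, ?_⟩
    have : x ∈ ι ⁻¹' U := by rw [← hUhpre]; exact hx.2
    exact this
  have hKBU : (KB ∩ U).Nonempty := by
    obtain ⟨x, hx⟩ := hd.exists_mem_open (hWBo.inter hUh) hWBU
    refine ⟨ι x, subset_closure ⟨x, hWBLB hx.1, rfl⟩, ?_⟩
    have : x ∈ ι ⁻¹' U := by rw [← hUhpre]; exact hx.2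
    exact this
  -- D is covered by KA ∪ KB
  have hcov : D ⊆ KA ∪ KB := by
    intro z hz
    have hz' : z ∈ closure (ι '' (e ⁻¹' (LA ∪ LB))) := by
      rw [mem_closure_iff]
      intro N hN hzN
      have hzv : z ∉ closure v := by
        rw [Set.eq_empty_iff_forall_notMem] at hclvD
        exact fun h => hclvD z ⟨h, hz⟩
      have hN' : IsOpen (N ∩ (closure v)ᶜ) := hN.inter isClosed_closure.isOpen_compl
      obtain ⟨x, hx⟩ := hdι.exists_mem_open hN' ⟨z, hzN, hzv⟩
      refine ⟨ι x, hx.1, x, ?_, rfl⟩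
      have hxnv : x ∉ ι ⁻¹' v := fun h => hx.2 (subset_closure h)
      have hxnVh : e x ∉ Vh := by rw [← hVhpre] at hxnv; exact hxnv
      exact hLcov hxnVh
    have : closure (ι '' (e ⁻¹' (LA ∪ LB))) ⊆ KA ∪ KB := by
      rw [Set.preimage_union, Set.image_union]
      refine closure_minimal ?_ (isClosed_closure.union isClosed_closure)
      exact Set.union_subset_union subset_closure subset_closure
    exact this hz'
  -- disconnect D : contradiction
  obtain ⟨zA, hzA, hzAU⟩ := hKAU
  obtain ⟨zB, hzB, hzBU⟩ := hKBU
  have hpre := hDconn.isPreconnected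
  have := hpre KBᶜ KAᶜ isClosed_closure.isOpen_compl
      isClosed_closure.isOpen_compl
      (fun z hz => by
        rcases hcov hz with h | h
        · exact Or.inl (Set.disjoint_left.mp hKdisj h)
        · exact Or.inr (Set.disjoint_right.mp hKdisj h))
      ⟨zA, hUD hzAU, Set.disjoint_left.mp hKdisj hzA⟩
      ⟨zB, hUD hzBU, Set.disjoint_right.mp hKdisj hzB⟩
  obtain ⟨w, hwD, hw1, hw2⟩ := this
  rcases hcov hwD with h | h
  · exact hw2 h
  · exact hw1 h
end

section
/- Let K be an indecomposable metrizable continuum. Then each composant of K is a first-category F_σ subset of K. -/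
/-- The *composant* of a point `p`: the union of all proper subcontinua containing `p`. -/
def Composant {K : Type*} [TopologicalSpace K] (p : K) : Set K :=
  {x | ∃ C : Set K, IsClosed C ∧ IsPreconnected C ∧ C ≠ Set.univ ∧ p ∈ C ∧ x ∈ C}

/-- A continuum is *indecomposable* if it is not the union of two proper subcontinua. -/
def IndecomposableContinuum (K : Type*) [TopologicalSpace K] : Prop :=
  ¬ ∃ H C : Set K, IsClosed H ∧ IsPreconnected H ∧ H ≠ Set.univ ∧
      IsClosed C ∧ IsPreconnected C ∧ C ≠ Set.univ ∧ H ∪ C = Set.univ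

open Set TopologicalSpace

section Aux

variable {K : Type*} [TopologicalSpace K] [ConnectedSpace K]

/-- Helper for the preconnectedness argument: if `A = C ∪ closure U` admits a separation
`w, z` with `C` missing `z`, we get a nonempty proper clopen set, contradiction. -/
private lemma preconn_helper {C U w z : Set K} (hC : IsClosed C)
    (hclU : closure U ⊆ U ∪ C) (hUopen : IsOpen U)
    (hx0 : (closure U ∩ C).Nonempty)
    (hw : IsOpen w) (hz : IsOpen z) (hsub : C ∪ closure U ⊆ w ∪ z)
    (hCz : C ∩ z = ∅) (hQne : ((C ∪ closure U) ∩ z).Nonempty)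
    (hdisj : (C ∪ closure U) ∩ (w ∩ z) = ∅) : False := by
  set A := C ∪ closure U with hA
  set Q := A ∩ z with hQ
  have hQU : Q ⊆ U := by
    rintro x ⟨hxA, hxz⟩
    rcases hxA with hxC | hxcl
    · have : x ∈ C ∩ z := ⟨hxC, hxz⟩
      simp [hCz] at this
    · rcases hclU hxcl with h | h
      · exact h
      · have : x ∈ C ∩ z := ⟨h, hxz⟩
        simp [hCz] at this
  have hQeq : Q = z ∩ U := by
    apply Set.Subset.antisymm
    · exact fun x hx => ⟨hx.2, hQU hx⟩
    · rintro x ⟨hxz, hxU⟩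
      exact ⟨Or.inr (subset_closure hxU), hxz⟩
  have hQopen : IsOpen Q := hQeq ▸ hz.inter hUopen
  have hQclosed : IsClosed Q := by
    have : Q = A \ w := by
      apply Set.Subset.antisymm
      · rintro x ⟨hxA, hxz⟩
        refine ⟨hxA, fun hxw => ?_⟩
        have : x ∈ A ∩ (w ∩ z) := ⟨hxA, hxw, hxz⟩
        simp [hdisj] at this
      · rintro x ⟨hxA, hxw⟩
        rcases hsub hxA with h | h
        · exact absurd h hxw
        · exact ⟨hxA, h⟩
    rw [this]
    exact (hC.union isClosed_closure).sdiff hw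
  rcases isClopen_iff.mp ⟨hQclosed, hQopen⟩ with h | h
  · rw [h] at hQne; exact hQne.ne_empty rfl
  · obtain ⟨x0, hx0cl, hx0C⟩ := hx0
    have : x0 ∈ Q := h ▸ mem_univ x0
    have : x0 ∈ C ∩ z := ⟨hx0C, this.2⟩
    simp [hCz] at this

/-- Gluing lemma: if `Cᶜ = U ∪ V` with `U, V` open disjoint, `U` nonempty, `C` a nonempty
closed preconnected set, then `C ∪ closure U` is a closed preconnected set missing `V`. -/
private lemma glue {C U V : Set K} (hC : IsClosed C) (hCpre : IsPreconnected C)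
    (hCne : C.Nonempty) (hU : IsOpen U) (hV : IsOpen V) (hUne : U.Nonempty)
    (hdisj : U ∩ V = ∅) (hcover : U ∪ V = Cᶜ) :
    IsClosed (C ∪ closure U) ∧ IsPreconnected (C ∪ closure U) ∧ (C ∪ closure U) ∩ V = ∅ := by
  have hclUV : closure U ∩ V = ∅ := by
    have : V ∩ closure U ⊆ closure (V ∩ U) := hV.inter_closure
    rw [Set.inter_comm U V] at hdisj
    rw [hdisj, closure_empty] at this
    rw [Set.inter_comm]
    exact Set.subset_empty_iff.mp this
  have hclU : closure U ⊆ U ∪ C := by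
    intro x hx
    by_cases hxC : x ∈ C
    · exact Or.inr hxC
    · have : x ∈ U ∪ V := hcover ▸ hxC
      rcases this with h | h
      · exact Or.inl h
      · have : x ∈ closure U ∩ V := ⟨hx, h⟩
        simp [hclUV] at this
  have hx0 : (closure U ∩ C).Nonempty := by
    by_contra h
    rw [Set.not_nonempty_iff_eq_empty] at h
    have hsub : closure U ⊆ U := fun x hx => by
      rcases hclU hx with h' | h'
      · exact h'
      · have : x ∈ closure U ∩ C := ⟨hx, h'⟩
        simp [h] at this
    have hclopen : IsClopen U := ⟨isClosed_of_closure_subset hsub, hU⟩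
    rcases isClopen_iff.mp hclopen with h' | h'
    · rw [h'] at hUne; exact hUne.ne_empty rfl
    · obtain ⟨c, hc⟩ := hCne
      have : c ∈ U := h' ▸ mem_univ c
      have : c ∈ Cᶜ := hcover ▸ Or.inl this
      exact this hc
  have hAclosed : IsClosed (C ∪ closure U) := hC.union isClosed_closure
  refine ⟨hAclosed, ?_, ?_⟩
  · -- preconnectedness
    intro w z hw hz hsub hwne hzne
    by_contra hne
    rw [Set.not_nonempty_iff_eq_empty] at hne
    have hCsub : C ⊆ w ∪ z := fun x hx => hsub (Or.inl hx)
    by_cases hCw : (C ∩ w).Nonempty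
    · by_cases hCz : (C ∩ z).Nonempty
      · obtain ⟨x, hx⟩ := hCpre w z hw hz hCsub hCw hCz
        have : x ∈ (C ∪ closure U) ∩ (w ∩ z) := ⟨Or.inl hx.1, hx.2⟩
        simp [hne] at this
      · rw [Set.not_nonempty_iff_eq_empty] at hCz
        exact preconn_helper hC hclU hU hx0 hw hz hsub hCz hzne hne
    · rw [Set.not_nonempty_iff_eq_empty] at hCw
      have hsub' : C ∪ closure U ⊆ z ∪ w := by rwa [Set.union_comm z w]
      have hne' : (C ∪ closure U) ∩ (z ∩ w) = ∅ := by rwa [Set.inter_comm z w]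
      exact preconn_helper hC hclU hU hx0 hz hw hsub' hCw hwne hne'
  · rw [Set.union_inter_distrib_right, hclUV, Set.union_empty]
    rw [Set.subset_empty_iff.symm]
    intro x ⟨hxC, hxV⟩
    have : x ∈ Cᶜ := hcover ▸ Or.inr hxV
    exact this hxC

/-- In an indecomposable continuum, every proper subcontinuum has empty interior. -/
private lemma interior_eq_empty_of_proper [CompactSpace K]
    (hind : IndecomposableContinuum K) {C : Set K} (hC : IsClosed C)
    (hCpre : IsPreconnected C) (hCne : C ≠ Set.univ) : interior C = ∅ := by
  by_contra hint
  rw [← Set.not_nonempty_iff_eq_empty, not_not] at hint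
  have hCnonempty : C.Nonempty := hint.mono interior_subset
  have hsopen : IsOpen Cᶜ := hC.isOpen_compl
  have hsne : Cᶜ.Nonempty := by
    rw [Set.nonempty_compl]; exact hCne
  have hclne : closure Cᶜ ≠ Set.univ := by
    rw [closure_compl]
    intro h
    obtain ⟨x, hx⟩ := hint
    have : x ∈ (interior C)ᶜ := h ▸ mem_univ x
    exact this hx
  by_cases hs : IsPreconnected (Cᶜ : Set K)
  · exact hind ⟨C, closure Cᶜ, hC, hCpre, hCne, isClosed_closure, hs.closure, hclne, by
      apply Set.eq_univ_of_forall
      intro x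
      by_cases hx : x ∈ C
      · exact Or.inl hx
      · exact Or.inr (subset_closure hx)⟩
  · rw [IsPreconnected] at hs
    push_neg at hs
    obtain ⟨u, v, hu, hv, hsub, hsu, hsv, hsuv⟩ := hs
    set U := Cᶜ ∩ u with hUdef
    set V := Cᶜ ∩ v with hVdef
    have hUopen : IsOpen U := hsopen.inter hu
    have hVopen : IsOpen V := hsopen.inter hv
    have hUne : U.Nonempty := hsu
    have hVne : V.Nonempty := hsv
    have hUV : U ∩ V = ∅ := by
      rw [← Set.subset_empty_iff]
      rintro x ⟨⟨hxc, hxu⟩, ⟨_, hxv⟩⟩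
      have : x ∈ Cᶜ ∩ (u ∩ v) := ⟨hxc, hxu, hxv⟩
      simp [hsuv] at this
    have hcover : U ∪ V = Cᶜ := by
      apply Set.Subset.antisymm
      · rintro x (⟨h, _⟩ | ⟨h, _⟩) <;> exact h
      · intro x hx
        rcases hsub hx with h | h
        · exact Or.inl ⟨hx, h⟩
        · exact Or.inr ⟨hx, h⟩
    have hVU : V ∩ U = ∅ := by rw [Set.inter_comm]; exact hUV
    have hcover' : V ∪ U = Cᶜ := by rw [Set.union_comm]; exact hcover
    obtain ⟨hA1, hA2, hA3⟩ := glue hC hCpre hCnonempty hUopen hVopen hUne hUV hcover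
    obtain ⟨hB1, hB2, hB3⟩ := glue hC hCpre hCnonempty hVopen hUopen hVne hVU hcover'
    refine hind ⟨C ∪ closure U, C ∪ closure V, hA1, hA2, ?_, hB1, hB2, ?_, ?_⟩
    · intro h
      obtain ⟨x, hx⟩ := hVne
      have : x ∈ (C ∪ closure U) ∩ V := ⟨h ▸ mem_univ x, hx⟩
      simp [hA3] at this
    · intro h
      obtain ⟨x, hx⟩ := hUne
      have : x ∈ (C ∪ closure V) ∩ U := ⟨h ▸ mem_univ x, hx⟩
      simp [hB3] at this
    · apply Set.eq_univ_of_forall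
      intro x
      by_cases hx : x ∈ C
      · exact Or.inl (Or.inl hx)
      · rcases (hcover ▸ hx : x ∈ U ∪ V) with h | h
        · exact Or.inl (Or.inr (subset_closure h))
        · exact Or.inr (Or.inr (subset_closure h))

end Aux

/-- In an indecomposable metrizable continuum, each composant is a meager `F_σ` set. -/
theorem composant_meagre_Fsigma (K : Type*) [TopologicalSpace K]
    [CompactSpace K] [T2Space K] [ConnectedSpace K]
    [TopologicalSpace.MetrizableSpace K]
    (hind : IndecomposableContinuum K) (p : K) :
    IsMeagre (Composant p) ∧
      ∃ F : ℕ → Set K, (∀ n, IsClosed (F n)) ∧ Composant p = ⋃ n, F n := by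
  classical
  letI := TopologicalSpace.metrizableSpaceMetric K
  haveI : SecondCountableTopology K := inferInstance
  obtain ⟨B, hBcount, -, hBbasis⟩ := exists_countable_basis K
  -- enumerate the basis together with the empty set
  have hBcount' : (insert (∅ : Set K) B).Countable := hBcount.insert _
  have hBne : (insert (∅ : Set K) B).Nonempty := ⟨∅, Set.mem_insert _ _⟩
  obtain ⟨e, he⟩ := hBcount'.exists_eq_range hBne
  -- define the closed pieces
  set F : ℕ → Set K := fun n =>
    if (e n).Nonempty ∧ p ∈ (e n)ᶜ then connectedComponentIn (e n)ᶜ p else ∅ with hF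
  have heopen : ∀ n, IsOpen (e n) := by
    intro n
    have : e n ∈ insert (∅ : Set K) B := he ▸ Set.mem_range_self n
    rcases this with h | h
    · rw [h]; exact isOpen_empty
    · exact hBbasis.isOpen h
  have hFclosed : ∀ n, IsClosed (F n) := by
    intro n
    simp only [hF]
    split_ifs with h
    · obtain ⟨-, hp⟩ := h
      rw [connectedComponentIn_eq_image hp]
      have hclosed : IsClosed ((e n)ᶜ : Set K) := (heopen n).isClosed_compl
      exact (hclosed.isClosedEmbedding_subtypeVal.isClosedMap _ isClosed_connectedComponent)
    · exact isClosed_empty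
  have hFprop : ∀ n, (e n).Nonempty → p ∈ (e n)ᶜ →
      IsClosed (connectedComponentIn (e n)ᶜ p) ∧
      IsPreconnected (connectedComponentIn (e n)ᶜ p) ∧
      connectedComponentIn (e n)ᶜ p ≠ Set.univ ∧
      p ∈ connectedComponentIn (e n)ᶜ p := by
    intro n hne hp
    refine ⟨?_, isPreconnected_connectedComponentIn, ?_, mem_connectedComponentIn hp⟩
    · have := hFclosed n
      simp only [hF] at this
      rwa [if_pos (show (e n).Nonempty ∧ p ∈ (e n)ᶜ from ⟨hne, hp⟩)] at this
    · intro h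
      obtain ⟨x, hx⟩ := hne
      have : x ∈ (e n)ᶜ := connectedComponentIn_subset _ _ (h ▸ Set.mem_univ x)
      exact this hx
  have hUnion : Composant p = ⋃ n, F n := by
    apply Set.Subset.antisymm
    · rintro x ⟨C, hC, hCpre, hCne, hpC, hxC⟩
      have hcompl : (Cᶜ : Set K).Nonempty := Set.nonempty_compl.mpr hCne
      obtain ⟨q, hq⟩ := hcompl
      obtain ⟨b, hbB, hqb, hbsub⟩ := hBbasis.exists_subset_of_mem_open hq hC.isOpen_compl
      have hbmem : b ∈ insert (∅ : Set K) B := Set.mem_insert_of_mem _ hbB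
      rw [he] at hbmem
      obtain ⟨n, hn⟩ := hbmem
      have hne : (e n).Nonempty := ⟨q, hn ▸ hqb⟩
      have hbsub' : e n ⊆ Cᶜ := hn ▸ hbsub
      have hCsub : C ⊆ (e n)ᶜ := fun y hy hy' => hbsub' hy' hy
      have hp : p ∈ (e n)ᶜ := hCsub hpC
      have hsub : C ⊆ connectedComponentIn (e n)ᶜ p :=
        hCpre.subset_connectedComponentIn hpC hCsub
      refine Set.mem_iUnion.mpr ⟨n, ?_⟩
      simp only [hF, if_pos (And.intro hne hp)]
      exact hsub hxC
    · intro x hx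
      obtain ⟨n, hn⟩ := Set.mem_iUnion.mp hx
      simp only [hF] at hn
      split_ifs at hn with h
      · obtain ⟨hne, hp⟩ := h
        obtain ⟨h1, h2, h3, h4⟩ := hFprop n hne hp
        exact ⟨connectedComponentIn (e n)ᶜ p, h1, h2, h3, h4, hn⟩
      · exact absurd hn (Set.notMem_empty x)
  constructor
  · rw [hUnion]
    apply isMeagre_iUnion
    intro n
    have hND : IsNowhereDense (F n) := by
      rw [(hFclosed n).isNowhereDense_iff]
      simp only [hF]
      split_ifs with h
      · obtain ⟨hne, hp⟩ := h
        obtain ⟨h1, h2, h3, -⟩ := hFprop n hne hp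
        exact interior_eq_empty_of_proper hind h1 h2 h3
      · simp
    rw [isMeagre_iff_countable_union_isNowhereDense]
    exact ⟨{F n}, by simpa using hND, Set.countable_singleton _, by simp⟩
  · exact ⟨F, hFclosed, hUnion⟩
end

section
/- Every indecomposable metrizable continuum has at least two disjoint composants; in particular, every indecomposable connected metrizable compactification of a separable metrizable space is irreducible between some two of its points. -/
open Set TopologicalSpace

/-- If `C` is a nonempty preconnected set and `P`, `Q` are disjoint open sets disjoint from
`C` such that `C ∪ P ∪ Q` is the whole connected space, then `C ∪ P` is preconnected. -/
lemma aux_union_piece {K : Type*} [TopologicalSpace K] [ConnectedSpace K]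
    {C P Q : Set K} (hC : IsPreconnected C) (hCne : C.Nonempty)
    (hP : IsOpen P) (hQ : IsOpen Q)
    (hcov : C ∪ P ∪ Q = univ) (hCP : C ∩ P = ∅) (hCQ : C ∩ Q = ∅)
    (hPQ : P ∩ Q = ∅) : IsPreconnected (C ∪ P) := by
  rw [isPreconnected_iff_subset_of_disjoint]
  intro u v hu hv hsub hdisj
  have key : ∀ u v : Set K, IsOpen u → IsOpen v → C ∪ P ⊆ u ∪ v →
      (C ∪ P) ∩ (u ∩ v) = ∅ → C ⊆ u → C ∪ P ⊆ u := by
    intro u v hu hv hsub hdisj hCu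
    -- cover the whole space by `u ∪ Q` and `v ∩ P`
    have hcover : (univ : Set K) ⊆ (u ∪ Q) ∪ (v ∩ P) := by
      intro x _
      have hx : x ∈ C ∪ P ∪ Q := hcov ▸ mem_univ x
      rcases hx with hx | hx
      · rcases hx with hx | hx
        · exact Or.inl (Or.inl (hCu hx))
        · rcases hsub (Or.inr hx) with h | h
          · exact Or.inl (Or.inl h)
          · exact Or.inr ⟨h, hx⟩
      · exact Or.inl (Or.inr hx)
    have hdisj2 : (univ : Set K) ∩ ((u ∪ Q) ∩ (v ∩ P)) = ∅ := by
      rw [univ_inter]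
      ext x
      simp only [mem_inter_iff, mem_union, mem_empty_iff_false, iff_false]
      rintro ⟨hx1 | hx1, hx2, hx3⟩
      · have : x ∈ (C ∪ P) ∩ (u ∩ v) := ⟨Or.inr hx3, hx1, hx2⟩
        rw [hdisj] at this
        exact notMem_empty x this
      · exact (notMem_empty x) (hPQ ▸ (⟨hx3, hx1⟩ : x ∈ P ∩ Q))
    have := (isPreconnected_iff_subset_of_disjoint.mp isPreconnected_univ)
      (u ∪ Q) (v ∩ P) (hu.union hQ) (hv.inter hP) hcover hdisj2
    rcases this with h | h
    · intro x hx
      rcases hx with hx | hx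
      · exact hCu hx
      · rcases h (mem_univ x) with h' | h'
        · exact h'
        · exact absurd ((hPQ ▸ (⟨hx, h'⟩ : x ∈ P ∩ Q))) (notMem_empty x)
    · obtain ⟨c, hc⟩ := hCne
      have : c ∈ v ∩ P := h (mem_univ c)
      exact absurd (hCP ▸ (⟨hc, this.2⟩ : c ∈ C ∩ P)) (notMem_empty c)
  have hCuv : C ⊆ u ∪ v := fun x hx => hsub (Or.inl hx)
  have hCduv : C ∩ (u ∩ v) = ∅ := by
    apply subset_empty_iff.mp
    rw [← hdisj]
    exact inter_subset_inter_left _ subset_union_left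
  rcases (isPreconnected_iff_subset_of_disjoint.mp hC) u v hu hv hCuv hCduv with h | h
  · exact Or.inl (key u v hu hv hsub hdisj h)
  · refine Or.inr (key v u hv hu ?_ ?_ h)
    · rwa [union_comm u v] at hsub
    · rwa [inter_comm u v] at hdisj

/-- In an indecomposable continuum, every proper subcontinuum has empty interior. -/
lemma aux_interior_empty {K : Type*} [TopologicalSpace K] [ConnectedSpace K]
    (hind : IndecomposableContinuum K) {C : Set K} (hCc : IsClosed C)
    (hCp : IsPreconnected C) (hCne : C ≠ univ) : interior C = ∅ := by
  by_contra h
  obtain ⟨z, hz⟩ := nonempty_iff_ne_empty.mpr h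
  have hCnonempty : C.Nonempty := ⟨z, interior_subset hz⟩
  by_cases hconn : IsPreconnected (Cᶜ : Set K)
  · refine hind ⟨C, closure (Cᶜ), hCc, hCp, hCne, isClosed_closure, hconn.closure, ?_, ?_⟩
    · rw [closure_compl]
      intro heq
      have : z ∈ (interior C)ᶜ := heq ▸ mem_univ z
      exact this hz
    · apply univ_subset_iff.mp
      intro x _
      by_cases hx : x ∈ C
      · exact Or.inl hx
      · exact Or.inr (subset_closure hx)
  · rw [isPreconnected_iff_subset_of_disjoint] at hconn
    push_neg at hconn
    obtain ⟨u, v, hu, hv, hsub, hdisj, hnu, hnv⟩ := hconn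
    set P : Set K := Cᶜ ∩ u with hPdef
    set Q : Set K := Cᶜ ∩ v with hQdef
    have hPo : IsOpen P := hCc.isOpen_compl.inter hu
    have hQo : IsOpen Q := hCc.isOpen_compl.inter hv
    have hPne : P.Nonempty := by
      obtain ⟨x, hx1, hx2⟩ := not_subset.mp hnv
      rcases hsub hx1 with h' | h'
      · exact ⟨x, hx1, h'⟩
      · exact absurd h' hx2
    have hQne : Q.Nonempty := by
      obtain ⟨x, hx1, hx2⟩ := not_subset.mp hnu
      rcases hsub hx1 with h' | h'
      · exact absurd h' hx2
      · exact ⟨x, hx1, h'⟩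
    have hPQ : P ∩ Q = ∅ := by
      apply subset_empty_iff.mp
      rw [← hdisj]
      rintro x ⟨⟨hx1, hx2⟩, ⟨_, hx3⟩⟩
      exact ⟨hx1, hx2, hx3⟩
    have hCP : C ∩ P = ∅ := by
      ext x; simp only [mem_inter_iff, mem_empty_iff_false, iff_false]
      rintro ⟨hx1, hx2, _⟩; exact hx2 hx1
    have hCQ : C ∩ Q = ∅ := by
      ext x; simp only [mem_inter_iff, mem_empty_iff_false, iff_false]
      rintro ⟨hx1, hx2, _⟩; exact hx2 hx1
    have hcov : C ∪ P ∪ Q = univ := by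
      apply univ_subset_iff.mp
      intro x _
      by_cases hx : x ∈ C
      · exact Or.inl (Or.inl hx)
      · rcases hsub hx with h' | h'
        · exact Or.inl (Or.inr ⟨hx, h'⟩)
        · exact Or.inr ⟨hx, h'⟩
    have hcov' : C ∪ Q ∪ P = univ := by
      rw [union_right_comm]; exact hcov
    have hCPconn : IsPreconnected (C ∪ P) :=
      aux_union_piece hCp hCnonempty hPo hQo hcov hCP hCQ hPQ
    have hCQconn : IsPreconnected (C ∪ Q) :=
      aux_union_piece hCp hCnonempty hQo hPo hcov' hCQ hCP (by rw [inter_comm]; exact hPQ)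
    have hCPeq : C ∪ P = Qᶜ := by
      ext x
      constructor
      · rintro (hx | hx) hxQ
        · exact (notMem_empty x) (hCQ ▸ (⟨hx, hxQ⟩ : x ∈ C ∩ Q))
        · exact (notMem_empty x) (hPQ ▸ (⟨hx, hxQ⟩ : x ∈ P ∩ Q))
      · intro hx
        have : x ∈ C ∪ P ∪ Q := hcov ▸ mem_univ x
        rcases this with (h' | h') | h'
        · exact Or.inl h'
        · exact Or.inr h'
        · exact absurd h' hx
    have hCQeq : C ∪ Q = Pᶜ := by
      ext x
      constructor
      · rintro (hx | hx) hxP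
        · exact (notMem_empty x) (hCP ▸ (⟨hx, hxP⟩ : x ∈ C ∩ P))
        · exact (notMem_empty x) (hPQ ▸ (⟨hxP, hx⟩ : x ∈ P ∩ Q))
      · intro hx
        have : x ∈ C ∪ P ∪ Q := hcov ▸ mem_univ x
        rcases this with (h' | h') | h'
        · exact Or.inl h'
        · exact absurd h' hx
        · exact Or.inr h'
    refine hind ⟨C ∪ P, C ∪ Q, ?_, hCPconn, ?_, ?_, hCQconn, ?_, ?_⟩
    · rw [hCPeq]; exact hQo.isClosed_compl
    · rw [hCPeq]
      intro heq
      obtain ⟨x, hx⟩ := hQne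
      have : x ∈ Qᶜ := heq ▸ mem_univ x
      exact this hx
    · rw [hCQeq]; exact hPo.isClosed_compl
    · rw [hCQeq]
      intro heq
      obtain ⟨x, hx⟩ := hPne
      have : x ∈ Pᶜ := heq ▸ mem_univ x
      exact this hx
    · apply univ_subset_iff.mp
      intro x _
      have : x ∈ C ∪ P ∪ Q := hcov ▸ mem_univ x
      rcases this with (h' | h') | h'
      · exact Or.inl (Or.inl h')
      · exact Or.inl (Or.inr h')
      · exact Or.inr (Or.inr h')

/-- Every indecomposable metrizable continuum has two disjoint composants; in
particular it is irreducible between some two of its points. -/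
theorem indecomposable_metrizable_continuum_irreducible (K : Type*) [TopologicalSpace K]
    [CompactSpace K] [T2Space K] [ConnectedSpace K]
    [TopologicalSpace.MetrizableSpace K]
    (hind : IndecomposableContinuum K) :
    ∃ p q : K, Disjoint (Composant p) (Composant q) ∧
      ∀ C : Set K, IsClosed C → IsPreconnected C → p ∈ C → q ∈ C →
        C = Set.univ := by
  have hsc : SecondCountableTopology K := by
    letI := TopologicalSpace.metrizableSpaceMetric K; infer_instance
  obtain ⟨b, hbcount, hbne, hbasis⟩ := TopologicalSpace.exists_countable_basis K
  have hKne : Nonempty K := inferInstance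
  obtain ⟨p⟩ := hKne
  -- for each basic open set B, the union of subcontinua through p missing B
  set F : Set K → Set K := fun B =>
    closure (⋃₀ {C : Set K | IsClosed C ∧ IsPreconnected C ∧ p ∈ C ∧ C ∩ B = ∅}) with hF
  have hFclosed : ∀ B, IsClosed (F B) := fun B => isClosed_closure
  have hFpre : ∀ B, IsPreconnected (F B) := by
    intro B
    apply IsPreconnected.closure
    exact isPreconnected_sUnion p _ (fun s hs => hs.2.2.1) (fun s hs => hs.2.1)
  have hFprop : ∀ B ∈ b, F B ≠ univ := by
    intro B hB heq
    obtain ⟨x, hx⟩ : B.Nonempty := by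
      rcases eq_empty_or_nonempty B with h | h
      · exact absurd (h ▸ hB) hbne
      · exact h
    have hsub : F B ⊆ Bᶜ := by
      apply closure_minimal _ (hbasis.isOpen hB).isClosed_compl
      rintro y ⟨C, hC, hyC⟩ hyB
      exact (notMem_empty y) (hC.2.2.2 ▸ (⟨hyC, hyB⟩ : y ∈ C ∩ B))
    exact (hsub (heq ▸ mem_univ x)) hx
  have hFint : ∀ B ∈ b, interior (F B) = ∅ := fun B hB =>
    aux_interior_empty hind (hFclosed B) (hFpre B) (hFprop B hB)
  -- Baire category: intersection of the dense open complements is dense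
  set S : Set (Set K) := (fun B => (F B)ᶜ) '' b with hS
  have hSdense : Dense (⋂₀ S) := by
    apply dense_sInter_of_isOpen
    · rintro s ⟨B, hB, rfl⟩
      exact (hFclosed B).isOpen_compl
    · exact hbcount.image _
    · rintro s ⟨B, hB, rfl⟩
      exact interior_eq_empty_iff_dense_compl.mp (hFint B hB)
  obtain ⟨q, hq⟩ := hSdense.nonempty
  -- q is not in the composant of p
  have hqp : q ∉ Composant p := by
    rintro ⟨C, hCc, hCp, hCne, hpC, hqC⟩
    have : (Cᶜ : Set K).Nonempty := by
      rcases eq_empty_or_nonempty (Cᶜ : Set K) with h | h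
      · exact absurd (compl_empty_iff.mp h) hCne
      · exact h
    obtain ⟨y, hy⟩ := this
    obtain ⟨B, hBb, hyB, hBsub⟩ :=
      hbasis.exists_subset_of_mem_open hy hCc.isOpen_compl
    have hCB : C ∩ B = ∅ := by
      ext x; simp only [mem_inter_iff, mem_empty_iff_false, iff_false]
      rintro ⟨hx1, hx2⟩; exact (hBsub hx2) hx1
    have hqF : q ∈ F B :=
      subset_closure ⟨C, ⟨hCc, hCp, hpC, hCB⟩, hqC⟩
    exact (hq _ ⟨B, hBb, rfl⟩) hqF
  refine ⟨p, q, ?_, ?_⟩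
  · rw [Set.disjoint_left]
    rintro x ⟨C, hCc, hCp, hCne, hpC, hxC⟩ ⟨D, hDc, hDp, hDne, hqD, hxD⟩
    have hEconn : IsPreconnected (C ∪ D) := IsPreconnected.union x hxC hxD hCp hDp
    have hEne : C ∪ D ≠ univ := by
      intro heq
      exact hind ⟨C, D, hCc, hCp, hCne, hDc, hDp, hDne, heq⟩
    exact hqp ⟨C ∪ D, hCc.union hDc, hEconn, hEne, Or.inl hpC, Or.inr hqD⟩
  · intro C hCc hCp hpC hqC
    by_contra hne
    exact hqp ⟨C, hCc, hCp, hne, hpC, hqC⟩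
end

section
/- Every strongly indecomposable separable metrizable space X admits a metrizable compactification that is indecomposable; i.e., there is a homeomorphic embedding h of X into the Hilbert cube [0,1]^ω such that the closure of h[X] is indecomposable. -/
/-! Embed `X` in the Hilbert cube and add, for every pair `U`, `V` of disjoint nonempty basic
open sets, one more coordinate: a Urysohn function that is `0` on `A \ V` and `1` on `A' \ V`,
where `A ∪ A' = X` is the splitting given by strong indecomposability. In the closure `K` of the
image, the closures of the images of `A` and `A'` then cover `K`, both meet the image of `U`, and
meet each other only inside the closure of the image of `V`. A connected `C ⊆ K` that is neither
dense nor nowhere dense contradicts this for `U` inside the interior of `closure C` and `V` away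
from `closure C`: `C` lies in one of the two closed pieces, hence so does the interior of its
closure, which meets the other piece outside `closure V`. Countably many coordinates suffice, so
no Baire category argument is needed. -/

open Set Topology TopologicalSpace unitInterval

section

variable {α X Z : Type*} [TopologicalSpace X] [TopologicalSpace Z]

theorem indecomposableSpace_of_forall_exists_closed_cover [RegularSpace Z]
    (h : ∀ U V : Set Z, IsOpen U → IsOpen V → U.Nonempty → V.Nonempty → Disjoint U V →
      ∃ F F' : Set Z, IsClosed F ∧ IsClosed F' ∧ F ∪ F' = univ ∧
        (F ∩ U).Nonempty ∧ (F' ∩ U).Nonempty ∧ F ∩ F' ⊆ closure V) :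
    IndecomposableSpace Z := by
  intro C hC
  by_contra! ⟨hnd, hnwd⟩
  have hU : (interior (closure C)).Nonempty := nonempty_iff_ne_empty.2 hnwd
  obtain ⟨z, hz⟩ : (closure C)ᶜ.Nonempty :=
    nonempty_compl.2 fun hCuniv => hnd (dense_iff_closure_eq.2 hCuniv)
  obtain ⟨s, hs, hsc, hsC⟩ :=
    exists_mem_nhds_isClosed_subset (isClosed_closure.isOpen_compl.mem_nhds hz)
  obtain ⟨F, F', hF, hF', hcover, ⟨a, haF, haC⟩, ⟨b, hbF', hbC⟩, hFF'⟩ :=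
    h _ _ isOpen_interior isOpen_interior hU ⟨z, mem_interior_iff_mem_nhds.2 hs⟩
      ((disjoint_compl_right.mono_right hsC).mono interior_subset interior_subset)
  -- `F ∩ F'` lies in `closure (interior s) ⊆ s`, away from `closure C`
  have hFF'C : ∀ c ∈ closure C, c ∈ F → c ∉ F' := fun c hc hcF hcF' =>
    hsC (closure_minimal interior_subset hsc (hFF' ⟨hcF, hcF'⟩)) hc
  have hCcover : C ⊆ Fᶜ ∪ F'ᶜ := fun c hc => by
    rw [← compl_inter]
    exact fun hcFF' => hFF'C c (subset_closure hc) hcFF'.1 hcFF'.2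
  have hFc : Fᶜ ⊆ F' := compl_subset_iff_union.2 hcover
  have hF'c : F'ᶜ ⊆ F := compl_subset_iff_union.2 ((union_comm _ _).trans hcover)
  rcases hC.isPreconnected.subset_or_subset hF.isOpen_compl hF'.isOpen_compl
    (disjoint_compl_left_iff_subset.2 hF'c) hCcover with hCF | hCF'
  · exact hFF'C a (interior_subset haC) haF
      (closure_minimal (hCF.trans hFc) hF' (interior_subset haC))
  · exact hFF'C b (interior_subset hbC)
      (closure_minimal (hCF'.trans hF'c) hF (interior_subset hbC)) hbF'

theorem closure_image_inter_closure_image_subset {f : α → Z} {A A' V : Set α}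
    (h : Disjoint (closure (f '' (A \ V))) (closure (f '' (A' \ V)))) :
    closure (f '' A) ∩ closure (f '' A') ⊆ closure (f '' V) := by
  have hsplit : ∀ S : Set α, closure (f '' S) ⊆ closure (f '' (S \ V)) ∪ closure (f '' V) :=
    fun S => by
      rw [← closure_union, ← image_union, sdiff_union_self]
      exact closure_mono (image_mono subset_union_left)
  rintro z ⟨hz, hz'⟩
  rcases hsplit A hz with hz | hz
  · rcases hsplit A' hz' with hz' | hz'
    · exact (h.ne_of_mem hz hz' rfl).elim
    · exact hz'
  · exact hz

theorem disjoint_closure_image_of_apply_eq {Y : Type*} [TopologicalSpace Y] [T1Space Y]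
    {f : α → Z} {φ : Z → Y} (hφ : Continuous φ) {S T : Set α} {c d : Y} (hcd : c ≠ d)
    (hS : ∀ x ∈ S, φ (f x) = c) (hT : ∀ x ∈ T, φ (f x) = d) :
    Disjoint (closure (f '' S)) (closure (f '' T)) := by
  have hS' : closure (f '' S) ⊆ φ ⁻¹' {c} :=
    closure_minimal (image_subset_iff.2 hS) (isClosed_singleton.preimage hφ)
  have hT' : closure (f '' T) ⊆ φ ⁻¹' {d} :=
    closure_minimal (image_subset_iff.2 hT) (isClosed_singleton.preimage hφ)
  exact ((disjoint_singleton.2 hcd).preimage φ).mono hS' hT'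

theorem denseRange_codRestrict_closure_range (f : α → Z) :
    DenseRange fun x => (⟨f x, subset_closure (mem_range_self x)⟩ : closure (range f)) :=
  ((denseRange_inclusion_iff subset_closure).2 subset_rfl).comp
    rangeFactorization_surjective.denseRange (continuous_inclusion subset_closure)

theorem exists_closed_cover_of_denseRange {f : X → Z} (hf : DenseRange f) (hfc : Continuous f)
    {B : Set (Set X)} (hB : IsTopologicalBasis B)
    (h : ∀ U ∈ B, ∀ V ∈ B, U.Nonempty → V.Nonempty → Disjoint U V → ∃ A A' : Set X,
      A ∪ A' = univ ∧ (A ∩ U).Nonempty ∧ (A' ∩ U).Nonempty ∧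
        Disjoint (closure (f '' (A \ V))) (closure (f '' (A' \ V))))
    {U V : Set Z} (hU : IsOpen U) (hV : IsOpen V) (hUne : U.Nonempty) (hVne : V.Nonempty)
    (hUV : Disjoint U V) :
    ∃ F F' : Set Z, IsClosed F ∧ IsClosed F' ∧ F ∪ F' = univ ∧
      (F ∩ U).Nonempty ∧ (F' ∩ U).Nonempty ∧ F ∩ F' ⊆ closure V := by
  obtain ⟨x, hx⟩ := hf.exists_mem_open hU hUne
  obtain ⟨y, hy⟩ := hf.exists_mem_open hV hVne
  obtain ⟨U', hU'B, hxU', hU'U⟩ := hB.exists_subset_of_mem_open hx (hU.preimage hfc)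
  obtain ⟨V', hV'B, hyV', hV'V⟩ := hB.exists_subset_of_mem_open hy (hV.preimage hfc)
  obtain ⟨A, A', hcover, ⟨a, haA, haU'⟩, ⟨b, hbA', hbU'⟩, hsep⟩ :=
    h U' hU'B V' hV'B ⟨x, hxU'⟩ ⟨y, hyV'⟩ ((hUV.preimage f).mono hU'U hV'V)
  refine ⟨closure (f '' A), closure (f '' A'), isClosed_closure, isClosed_closure, ?_,
    ⟨f a, subset_closure (mem_image_of_mem f haA), hU'U haU'⟩,
    ⟨f b, subset_closure (mem_image_of_mem f hbA'), hU'U hbU'⟩, ?_⟩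
  · rw [← closure_union, ← image_union, hcover, image_univ, hf.closure_range]
  · exact (closure_image_inter_closure_image_subset hsep).trans
      (closure_mono (image_subset_iff.2 hV'V))

theorem StronglyIndecomposable.exists_cover_separated [NormalSpace X]
    (h : StronglyIndecomposable X) {U V : Set X} (hU : IsOpen U) (hV : IsOpen V)
    (hUne : U.Nonempty) (hVne : V.Nonempty) (hUV : Disjoint U V) :
    ∃ A A' : Set X, A ∪ A' = univ ∧ (A ∩ U).Nonempty ∧ (A' ∩ U).Nonempty ∧
      ∃ w : X → I, Continuous w ∧ EqOn w 0 (A \ V) ∧ EqOn w 1 (A' \ V) := by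
  obtain ⟨A, A', hA, hA', hcover, hAU, hA'U, hAA'⟩ := h U V hU hV hUne hVne hUV
  have hdisj : Disjoint (A \ V) (A' \ V) :=
    disjoint_left.2 fun x hx hx' => hx.2 (hAA' ⟨hx.1, hx'.1⟩)
  obtain ⟨w, hw0, hw1, hwI⟩ :=
    exists_continuous_zero_one_of_isClosed (hA.sdiff hV) (hA'.sdiff hV) hdisj
  refine ⟨A, A', hcover, hAU, hA'U, fun x => ⟨w x, hwI x⟩, by fun_prop,
    fun x hx => Subtype.ext (hw0 hx), fun x hx => Subtype.ext (hw1 hx)⟩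

theorem Topology.IsEmbedding.exists_isEmbedding_nat_arrow_apply_eq {K J : Type*}
    [TopologicalSpace K] [Countable J] {e : X → ℕ → K} (he : IsEmbedding e) (w : J → X → K)
    (hw : ∀ j, Continuous (w j)) :
    ∃ f : X → ℕ → K, IsEmbedding f ∧ ∃ n : J → ℕ, ∀ j x, f x (n j) = w j x := by
  obtain ⟨_⟩ := nonempty_denumerable (ℕ ⊕ J)
  let Φ : (ℕ → K) × (J → K) ≃ₜ (ℕ → K) := Homeomorph.sumArrowHomeomorphProdArrow.symm.trans
    (Homeomorph.piCongrLeft (Y := fun _ => K) (Denumerable.eqv (ℕ ⊕ J)))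
  have hgraph : IsEmbedding fun x => (e x, fun j => w j x) :=
    (he.prodMap .id).comp (isEmbedding_graph (continuous_pi hw))
  refine ⟨Φ ∘ fun x => (e x, fun j => w j x), Φ.isEmbedding.comp hgraph,
    fun j => Denumerable.eqv (ℕ ⊕ J) (.inr j), fun j x => ?_⟩
  simp [Φ, Homeomorph.piCongrLeft_apply_apply]

end

/-- Every strongly indecomposable separable metrizable space embeds densely in an
indecomposable metrizable subcontinuum of the Hilbert cube. -/
theorem stronglyIndecomposable_metrizable_indecomposable_compactification
    (X : Type*) [TopologicalSpace X] [TopologicalSpace.SeparableSpace X]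
    [TopologicalSpace.MetrizableSpace X] (h : StronglyIndecomposable X) :
    ∃ f : X → (ℕ → Set.Icc (0 : ℝ) 1), Topology.IsEmbedding f ∧
      IndecomposableSpace (closure (Set.range f)) := by
  let _ : MetricSpace X := metrizableSpaceMetric X
  obtain ⟨e, he⟩ := Metric.PiNatEmbed.exists_embedding_to_hilbert_cube (X := X)
  obtain ⟨B, hBc, -, hB⟩ := exists_countable_basis X
  let T : Set (Set X × Set X) := {q ∈ B ×ˢ B | q.1.Nonempty ∧ q.2.Nonempty ∧ Disjoint q.1 q.2}
  have : Countable T := ((hBc.prod hBc).mono (sep_subset _ _)).to_subtype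
  choose A A' hcover hAU hA'U w hw hw0 hw1 using fun q : T =>
    h.exists_cover_separated (hB.isOpen q.2.1.1) (hB.isOpen q.2.1.2) q.2.2.1 q.2.2.2.1 q.2.2.2.2
  obtain ⟨f, hf, n, hfn⟩ := he.exists_isEmbedding_nat_arrow_apply_eq w hw
  refine ⟨f, hf, indecomposableSpace_of_forall_exists_closed_cover fun _ _ =>
    exists_closed_cover_of_denseRange (denseRange_codRestrict_closure_range f)
      (hf.continuous.subtype_mk _) hB fun U hU V hV hUne hVne hUV => ?_⟩
  let q : T := ⟨(U, V), ⟨hU, hV⟩, hUne, hVne, hUV⟩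
  refine ⟨A q, A' q, hcover q, hAU q, hA'U q, disjoint_closure_image_of_apply_eq
    (φ := fun z : closure (range f) => z.1 (n q))
    ((continuous_apply _).comp continuous_subtype_val) zero_ne_one
    (fun x hx => (hfn q x).trans (hw0 q hx)) (fun x hx => (hfn q x).trans (hw1 q hx))⟩
end
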